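/- The sequence Δ_n of maximum degrees of the partition graphs G_n is nondecreasing: for all n ≥ 1 and k ≥ 1, Δ_{n+k} ≥ Δ_n. -/
import Mathlib

def conjFn {n : ℕ} (P : Nat.Partition n) : ℕ → ℕ :=
  fun i => Multiset.countP (fun p => i < p) P.parts

noncomputable def l1 (a b : ℕ → ℕ) : ℕ := ∑' i, Nat.dist (a i) (b i)

def Transfer {n : ℕ} (P Q : Nat.Partition n) : Prop :=
  ∃ a b : ℕ, a ∈ P.parts ∧ (b ∈ P.parts.erase a ∨ b = 0) ∧
    Q.parts = Multiset.filter (fun x => 0 < x)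
      ((a - 1) ::ₘ (b + 1) ::ₘ ((P.parts.erase a).erase b))

def G (n : ℕ) : SimpleGraph (Nat.Partition n) :=
  SimpleGraph.fromRel (fun P Q => Transfer P Q)

def conjParts {n : ℕ} (P : Nat.Partition n) : Multiset ℕ :=
  ((Multiset.range n).map (conjFn P)).filter (fun x => 0 < x)

def IsConjugate {n : ℕ} (P Q : Nat.Partition n) : Prop :=
  Q.parts = conjParts P

def Tmap {n k : ℕ} (τ : Nat.Partition k) (P : Nat.Partition n) : Nat.Partition (n + k) where
  parts := P.parts + τ.parts
  parts_pos := fun hx => by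
    rcases Multiset.mem_add.mp hx with h | h
    · exact P.parts_pos h
    · exact τ.parts_pos h
  parts_sum := by rw [Multiset.sum_add, P.parts_sum, τ.parts_sum]

theorem conjFn_Tmap {n k : ℕ} (τ : Nat.Partition k) (P : Nat.Partition n) :
    conjFn (Tmap τ P) = fun i => conjFn P i + conjFn τ i := by
  funext i
  simp [conjFn, Tmap, Multiset.countP_add]

noncomputable def omegaLoc {V : Type*} (G : SimpleGraph V) (v : V) : ℕ :=
  sSup {m | ∃ s : Finset V, G.IsNClique m s ∧ v ∈ s}

noncomputable def maxDeg (n : ℕ) : ℕ :=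
  sSup (Set.range fun P : Nat.Partition n => ((G n).neighborSet P).ncard)

-- auxiliary lemmas

theorem Tmap_injective {n k : ℕ} (τ : Nat.Partition k) :
    Function.Injective (Tmap τ (n := n)) := by
  intro P Q h
  have := congrArg Nat.Partition.parts h
  simp only [Tmap] at this
  exact Nat.Partition.ext (add_right_cancel this)

theorem transfer_Tmap {n k : ℕ} (τ : Nat.Partition k) {P Q : Nat.Partition n}
    (h : Transfer P Q) : Transfer (Tmap τ P) (Tmap τ Q) := by
  obtain ⟨a, b, ha, hb, hQ⟩ := h
  refine ⟨a, b, Multiset.mem_add.mpr (Or.inl ha), ?_, ?_⟩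
  · rcases hb with hb | hb
    · left
      show b ∈ (P.parts + τ.parts).erase a
      rw [Multiset.erase_add_left_pos _ ha]
      exact Multiset.mem_add.mpr (Or.inl hb)
    · right; exact hb
  · have hτ : Multiset.filter (fun x => 0 < x) τ.parts = τ.parts :=
      Multiset.filter_eq_self.mpr (fun x hx => τ.parts_pos hx)
    have e1 : (Tmap τ P).parts.erase a = P.parts.erase a + τ.parts :=
      Multiset.erase_add_left_pos _ ha
    have e2 : ((Tmap τ P).parts.erase a).erase b
        = (P.parts.erase a).erase b + τ.parts := by
      rw [e1]
      rcases hb with hb | hb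
      · exact Multiset.erase_add_left_pos _ hb
      · subst hb
        have h1 : (0:ℕ) ∉ P.parts.erase a + τ.parts := by
          intro h0
          rcases Multiset.mem_add.mp h0 with h0 | h0
          · exact absurd (P.parts_pos (Multiset.mem_of_mem_erase h0)) (lt_irrefl 0)
          ·exact absurd (τ.parts_pos h0) (lt_irrefl 0)
        have h2 : (0:ℕ) ∉ (P.parts.erase a).erase 0 + τ.parts := by
          intro h0
          rcases Multiset.mem_add.mp h0 with h0 | h0
          · exact absurd (P.parts_pos (Multiset.mem_of_mem_erase (Multiset.mem_of_mem_erase h0))) (lt_irrefl 0)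
          · exact absurd (τ.parts_pos h0) (lt_irrefl 0)
        rw [Multiset.erase_of_notMem h1, Multiset.erase_of_notMem
          (fun h0 => absurd (P.parts_pos (Multiset.mem_of_mem_erase h0)) (lt_irrefl 0))]
    rw [show (Tmap τ Q).parts = Q.parts + τ.parts from rfl, e2, hQ]
    rw [show (a-1) ::ₘ (b+1) ::ₘ ((P.parts.erase a).erase b + τ.parts)
        = ((a-1) ::ₘ (b+1) ::ₘ (P.parts.erase a).erase b) + τ.parts by
      simp [Multiset.cons_add]]
    rw [Multiset.filter_add, hτ]

/-- the sequence `Δ_n` of maximum degrees is nondecreasing. -/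
theorem stmt11 (n k : ℕ) (hn : 1 ≤ n) (hk : 1 ≤ k) : maxDeg n ≤ maxDeg (n + k) := by
  set τ := Nat.Partition.indiscrete k
  have hadj : ∀ P Q : Nat.Partition n, (G n).Adj P Q → (G (n+k)).Adj (Tmap τ P) (Tmap τ Q) := by
    intro P Q ⟨hne, h⟩
    refine ⟨fun he => hne (Tmap_injective τ he), ?_⟩
    rcases h with h | h
    · exact Or.inl (transfer_Tmap τ h)
    · exact Or.inr (transfer_Tmap τ h)
  apply csSup_le
  · exact ⟨_, Set.mem_range_self default⟩
  rintro m ⟨P, rfl⟩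
  have h1 : ((G n).neighborSet P).ncard
      = (Tmap τ '' ((G n).neighborSet P)).ncard :=
    (Set.ncard_image_of_injective _ (Tmap_injective τ)).symm
  have h2 : Tmap τ '' ((G n).neighborSet P) ⊆ (G (n+k)).neighborSet (Tmap τ P) := by
    rintro _ ⟨Q, hQ, rfl⟩
    exact hadj P Q hQ
  calc ((G n).neighborSet P).ncard
      = (Tmap τ '' ((G n).neighborSet P)).ncard := h1
    _ ≤ ((G (n+k)).neighborSet (Tmap τ P)).ncard :=
        Set.ncard_le_ncard h2 (Set.toFinite _)
    _ ≤ maxDeg (n+k) := le_csSup (Set.Finite.bddAbove (Set.finite_range _)) ⟨_, rfl⟩
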